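/- Let g be an optimal solution of the QP f_QP(P_X, ε) and set |g⟩ = Σ_x g_x|x⟩, θ = |g⟩⟨g|, λ = ⟨g|g⟩. Then (θ, λ) is feasible for f_SDP(P_X, ε), hence f_SDP(P_X, ε) ≤ f_QP(P_X, ε). -/

import Mathlib

open Matrix Finset
open scoped ComplexOrder

/-- Outer product `|v⟩⟨v|`. -/
noncomputable def outer {n : Type*} (v : n → ℂ) : Matrix n n ℂ :=
  Matrix.of fun i j => v i * star (v j)

/-- The pinching map `𝒫(θ) = Σ_x |x⟩⟨x| ⟨x|θ|x⟩`. -/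
noncomputable def pinch {d : ℕ} (θ : Matrix (Fin d) (Fin d) ℂ) : Matrix (Fin d) (Fin d) ℂ :=
  Matrix.diagonal fun x => θ x x

/-- The single-system SDP `f_SDP(P_X, ε)`, with `ψ_X = |ψ_X⟩⟨ψ_X|`, `|ψ_X⟩ = Σ_x p_x |x⟩`. -/
noncomputable def fSDP {d : ℕ} (p : Fin d → ℝ) (ε : ℝ) : ℝ :=
  sInf {l : ℝ | 0 ≤ l ∧ ∃ θ : Matrix (Fin d) (Fin d) ℂ,
    ((l : ℂ) • (1 : Matrix (Fin d) (Fin d) ℂ) - θ).PosSemidef ∧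
    ((1 : Matrix (Fin d) (Fin d) ℂ) - pinch θ).PosSemidef ∧
    1 - ε ^ 2 ≤ (((outer fun x => (p x : ℂ)) * θ).trace).re ∧
    θ.PosSemidef}

/-- The quadratic program `f_QP(P_X, ε)` from the paper. -/
noncomputable def fQP {d : ℕ} (p : Fin d → ℝ) (ε : ℝ) : ℝ :=
  sInf {v : ℝ | ∃ g : Fin d → ℝ, (∀ x, 0 ≤ g x ∧ g x ≤ 1) ∧
    Real.sqrt (1 - ε ^ 2) ≤ ∑ x, g x * p x ∧ v = ∑ x, (g x) ^ 2}

/-! θ = |g⟩⟨g| satisfies every constraint of the SDP: its pinching is diag(g_x²) ≤ 𝟙,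
Tr[ψ_X θ] = ⟨p|g⟩² ≥ 1 − ε², and θ ≤ ⟨g|g⟩ 𝟙 by Cauchy–Schwarz. As this holds for every
QP-feasible g, taking infima gives f_SDP ≤ f_QP. -/


section Outer

variable {n : Type*}

lemma outer_eq_vecMulVec (v : n → ℂ) : outer v = vecMulVec v (star v) := rfl

lemma isHermitian_ofReal_smul_one [DecidableEq n] (c : ℝ) :
    ((c : ℂ) • (1 : Matrix n n ℂ)).IsHermitian := by
  simp [IsHermitian, conjTranspose_smul]

variable [Fintype n]

lemma posSemidef_outer (v : n → ℂ) : (outer v).PosSemidef :=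
  posSemidef_vecMulVec_self_star v

lemma star_dotProduct_outer_mulVec (v x : n → ℂ) :
    star x ⬝ᵥ (outer v *ᵥ x) = star (star v ⬝ᵥ x) * (star v ⬝ᵥ x) := by
  rw [outer_eq_vecMulVec, vecMulVec_mulVec, op_smul_eq_smul, dotProduct_smul, smul_eq_mul,
    star_dotProduct, star_star, mul_comm]

lemma posSemidef_smul_one_sub_outer [DecidableEq n] (v : n → ℂ) :
    (((∑ i, ‖v i‖ ^ 2 : ℝ) : ℂ) • (1 : Matrix n n ℂ) - outer v).PosSemidef := by
  refine .of_dotProduct_mulVec_nonneg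
    ((isHermitian_ofReal_smul_one _).sub (posSemidef_outer v).isHermitian) fun x => ?_
  set V := WithLp.toLp 2 v
  set X := WithLp.toLp 2 x
  have hinner : star v ⬝ᵥ x = inner ℂ V X := dotProduct_comm _ _
  have hxx : star x ⬝ᵥ x = ((‖X‖ ^ 2 : ℝ) : ℂ) := by
    rw [dotProduct_comm, ← EuclideanSpace.inner_toLp_toLp, inner_self_eq_norm_sq_to_K]
    norm_cast
  have hcs : ‖inner ℂ V X‖ ^ 2 ≤ ‖V‖ ^ 2 * ‖X‖ ^ 2 := by
    rw [← mul_pow]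
    exact pow_le_pow_left₀ (norm_nonneg _) (norm_inner_le_norm V X) 2
  rw [sub_mulVec, dotProduct_sub, star_dotProduct_outer_mulVec, smul_mulVec, one_mulVec,
    dotProduct_smul, hxx, hinner, Complex.star_def, Complex.conj_mul', ← EuclideanSpace.norm_sq_eq,
    smul_eq_mul]
  norm_cast
  exact sub_nonneg.mpr hcs

lemma trace_outer_mul_outer (u v : n → ℂ) :
    (outer u * outer v).trace = ((‖star u ⬝ᵥ v‖ ^ 2 : ℝ) : ℂ) := by
  rw [outer_eq_vecMulVec, outer_eq_vecMulVec, vecMulVec_mul_vecMulVec, trace_vecMulVec,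
    dotProduct_smul, smul_eq_mul, dotProduct_star, dotProduct_comm v, Complex.star_def,
    Complex.mul_conj']
  norm_cast

lemma star_ofReal_dotProduct_ofReal (p g : n → ℝ) :
    star (fun x => (p x : ℂ)) ⬝ᵥ (fun x => (g x : ℂ)) = ((∑ x, g x * p x : ℝ) : ℂ) := by
  simp [dotProduct, mul_comm]

end Outer

lemma pinch_outer {d : ℕ} (v : Fin d → ℂ) :
    pinch (outer v) = diagonal fun x => ((‖v x‖ ^ 2 : ℝ) : ℂ) := by
  ext x y
  simp [pinch, outer, diagonal, Complex.mul_conj']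

lemma posSemidef_one_sub_pinch_outer {d : ℕ} (v : Fin d → ℂ) (hv : ∀ x, ‖v x‖ ≤ 1) :
    ((1 : Matrix (Fin d) (Fin d) ℂ) - pinch (outer v)).PosSemidef := by
  rw [pinch_outer, ← diagonal_one, diagonal_sub, posSemidef_diagonal_iff]
  intro x
  rw [← Complex.ofReal_one, ← Complex.ofReal_sub, Complex.zero_le_real, sub_nonneg]
  exact pow_le_one₀ (norm_nonneg _) (hv x)

section QP

variable {d : ℕ} {p : Fin d → ℝ} {ε : ℝ} {g : Fin d → ℝ}

lemma sdp_feasible_of_qp_feasible (hg01 : ∀ x, 0 ≤ g x ∧ g x ≤ 1)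
    (hgfeas : Real.sqrt (1 - ε ^ 2) ≤ ∑ x, g x * p x) :
    0 ≤ ∑ x, (g x) ^ 2 ∧
    (((↑(∑ x, (g x) ^ 2) : ℂ) • (1 : Matrix (Fin d) (Fin d) ℂ)
        - outer fun x => (g x : ℂ)).PosSemidef) ∧
    ((1 : Matrix (Fin d) (Fin d) ℂ) - pinch (outer fun x => (g x : ℂ))).PosSemidef ∧
    (1 - ε ^ 2 ≤ (((outer fun x => (p x : ℂ)) * outer fun x => (g x : ℂ)).trace).re) ∧
    (outer fun x => (g x : ℂ)).PosSemidef := by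
  have hnorm : ∀ x, ‖(g x : ℂ)‖ = g x := fun x => by simp [abs_of_nonneg (hg01 x).1]
  have hle := posSemidef_smul_one_sub_outer fun x => (g x : ℂ)
  simp only [hnorm] at hle
  refine ⟨by positivity, hle,
    posSemidef_one_sub_pinch_outer _ fun x => (hnorm x).trans_le (hg01 x).2, ?_, posSemidef_outer _⟩
  rw [trace_outer_mul_outer, star_ofReal_dotProduct_ofReal, Complex.ofReal_re, Complex.norm_real,
    Real.norm_eq_abs, sq_abs]
  calc 1 - ε ^ 2 ≤ Real.sqrt (1 - ε ^ 2) ^ 2 := Real.sq_sqrt' ▸ le_max_left _ _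
    _ ≤ (∑ x, g x * p x) ^ 2 := pow_le_pow_left₀ (Real.sqrt_nonneg _) hgfeas 2

lemma fSDP_le_sum_sq (hg01 : ∀ x, 0 ≤ g x ∧ g x ≤ 1)
    (hgfeas : Real.sqrt (1 - ε ^ 2) ≤ ∑ x, g x * p x) :
    fSDP p ε ≤ ∑ x, (g x) ^ 2 :=
  have ⟨hl0, hle, hpinch, htrace, hθ⟩ := sdp_feasible_of_qp_feasible hg01 hgfeas
  csInf_le ⟨0, fun _ hl => hl.1⟩ ⟨hl0, _, hle, hpinch, htrace, hθ⟩

lemma fSDP_le_fQP (hg01 : ∀ x, 0 ≤ g x ∧ g x ≤ 1)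
    (hgfeas : Real.sqrt (1 - ε ^ 2) ≤ ∑ x, g x * p x) :
    fSDP p ε ≤ fQP p ε := by
  refine le_csInf ⟨_, g, hg01, hgfeas, rfl⟩ ?_
  rintro _ ⟨g', hg'01, hg'feas, rfl⟩
  exact fSDP_le_sum_sq hg'01 hg'feas

end QP

theorem qp_optimizer_gives_sdp_feasible_general {d : ℕ} (p : Fin d → ℝ) (ε : ℝ)
    (g : Fin d → ℝ) (hg01 : ∀ x, 0 ≤ g x ∧ g x ≤ 1)
    (hgfeas : Real.sqrt (1 - ε ^ 2) ≤ ∑ x, g x * p x) :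
    (0 ≤ ∑ x, (g x) ^ 2) ∧
    (((↑(∑ x, (g x) ^ 2) : ℂ) • (1 : Matrix (Fin d) (Fin d) ℂ)
        - outer fun x => (g x : ℂ)).PosSemidef) ∧
    ((1 : Matrix (Fin d) (Fin d) ℂ) - pinch (outer fun x => (g x : ℂ))).PosSemidef ∧
    (1 - ε ^ 2 ≤ (((outer fun x => (p x : ℂ)) * outer fun x => (g x : ℂ)).trace).re) ∧
    (outer fun x => (g x : ℂ)).PosSemidef ∧
    fSDP p ε ≤ fQP p ε := by
  obtain ⟨hl0, hle, hpinch, htrace, hθ⟩ := sdp_feasible_of_qp_feasible hg01 hgfeas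
  exact ⟨hl0, hle, hpinch, htrace, hθ, fSDP_le_fQP hg01 hgfeas⟩

/-- if `g` is optimal for the QP, then `θ = |g⟩⟨g|`, `λ = ⟨g|g⟩ = Σ_x g_x²`
is feasible for `f_SDP(P_X, ε)`, and hence `f_SDP(P_X, ε) ≤ f_QP(P_X, ε)`. -/
theorem qp_optimizer_gives_sdp_feasible {d : ℕ} (p : Fin d → ℝ) (hp : ∀ x, 0 ≤ p x)
    (hps : ∑ x, p x = 1) (ε : ℝ) (hε : ε ∈ Set.Ioo (0 : ℝ) 1)
    (g : Fin d → ℝ) (hg01 : ∀ x, 0 ≤ g x ∧ g x ≤ 1)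
    (hgfeas : Real.sqrt (1 - ε ^ 2) ≤ ∑ x, g x * p x)
    (hgopt : ∑ x, (g x) ^ 2 = fQP p ε) :
    (0 ≤ ∑ x, (g x) ^ 2) ∧
    (((↑(∑ x, (g x) ^ 2) : ℂ) • (1 : Matrix (Fin d) (Fin d) ℂ)
        - outer fun x => (g x : ℂ)).PosSemidef) ∧
    ((1 : Matrix (Fin d) (Fin d) ℂ) - pinch (outer fun x => (g x : ℂ))).PosSemidef ∧
    (1 - ε ^ 2 ≤ (((outer fun x => (p x : ℂ)) * outer fun x => (g x : ℂ)).trace).re) ∧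
    (outer fun x => (g x : ℂ)).PosSemidef ∧
    fSDP p ε ≤ fQP p ε :=
  qp_optimizer_gives_sdp_feasible_general p ε g hg01 hgfeas
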